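/- Let κ be a regular uncountable cardinal and suppose there exists a generalized Sierpinski set of size κ, i.e., a set S ⊆ 2^ω with |S| = κ such that |S ∩ H| < κ for every μ-null set H ⊆ 2^ω. Then there exists a free filter F on ℕ such that, identified with a subset of 2^ω, F is meager but is not μ-measurable. -/

import Mathlib

open MeasureTheory

/-- `F` is a filter of subsets of `ℕ`: it contains `ℕ`, is closed under finite (binary)
intersections and under supersets. -/
def IsSetFilter (F : Set (Set ℕ)) : Prop :=
  Set.univ ∈ F ∧ (∀ X ∈ F, ∀ Y ∈ F, X ∩ Y ∈ F) ∧ (∀ X ∈ F, ∀ Y : Set ℕ, X ⊆ Y → Y ∈ F)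

/-- A free filter: a proper filter containing every cofinite subset of `ℕ`
(so every member of `F` is infinite). -/
def IsFreeFilter (F : Set (Set ℕ)) : Prop :=
  IsSetFilter F ∧ ∅ ∉ F ∧ ∀ X : Set ℕ, Xᶜ.Finite → X ∈ F

open scoped Classical in
/-- The characteristic function of `X ⊆ ℕ`, as a point of Cantor space `2^ω = ℕ → Bool`. -/
noncomputable def chi (X : Set ℕ) : ℕ → Bool := fun n => if n ∈ X then true else false

/-- `μ` is the canonical product probability measure on Cantor space (the infinite product
of uniform measures on `{0,1}`, i.e. Haar measure): every cylinder determined by values on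
a finite set `s` has measure `(1/2)^|s|`. -/
def IsCantorMeasure (μ : Measure (ℕ → Bool)) : Prop :=
  ∀ (s : Finset ℕ) (f : ℕ → Bool),
    μ {x : ℕ → Bool | ∀ i ∈ s, x i = f i} = (1 / 2 : ENNReal) ^ s.card

namespace SGMF

/-- iterated index function: `fseq 0 k = k`, `fseq (j+1) k = fseq j (2^k)`. -/
def fseq : ℕ → ℕ → ℕ
  | 0, k => k
  | j+1, k => fseq j (2 ^ k)

lemma fseq_strictMono (j : ℕ) : StrictMono (fseq j) := by
  induction j with
  | zero => exact fun a b h => h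
  | succ j ih => exact fun a b h => ih (Nat.pow_lt_pow_right one_lt_two h)

lemma le_fseq (j k : ℕ) : k ≤ fseq j k := by
  induction j generalizing k with
  | zero => exact le_rfl
  | succ j ih => exact le_trans (Nat.le_of_lt (Nat.lt_two_pow_self (n := k))) (le_trans (ih _) le_rfl)

/-- level-`j` block number `k`: the interval `[2^(fseq j k), 2^(fseq j (k+1)))`. -/
def Blk (j k : ℕ) : Finset ℕ := Finset.Ico (2 ^ fseq j k) (2 ^ fseq j (k+1))

lemma Blk_nonempty (j k : ℕ) : (Blk j k).Nonempty := by
  refine Finset.nonempty_Ico.2 (Nat.pow_lt_pow_right one_lt_two ?_)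
  exact fseq_strictMono j (Nat.lt_succ_self k)

lemma le_of_mem_Blk {j k n : ℕ} (h : n ∈ Blk j k) : 2 ^ fseq j k ≤ n :=
  (Finset.mem_Ico.1 h).1

lemma k_le_of_mem_Blk {j k n : ℕ} (h : n ∈ Blk j k) : k ≤ n :=
  le_trans (le_trans (le_fseq j k) (Nat.le_of_lt (Nat.lt_two_pow_self))) (le_of_mem_Blk h)

lemma Blk_subset {j k i : ℕ} (h1 : 2 ^ k ≤ i) (h2 : i < 2 ^ (k+1)) :
    Blk j i ⊆ Blk (j+1) k := by
  intro n hn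
  simp only [Blk, Finset.mem_Ico] at hn ⊢
  constructor
  · exact le_trans (Nat.pow_le_pow_right two_pos
      ((fseq_strictMono j).le_iff_le.2 h1)) hn.1
  · exact lt_of_lt_of_le hn.2 (Nat.pow_le_pow_right two_pos
      ((fseq_strictMono j).le_iff_le.2 h2))

lemma Blk_disjoint {j : ℕ} {i i' : ℕ} (h : i < i') {n : ℕ}
    (h1 : n ∈ Blk j i) (h2 : n ∈ Blk j i') : False := by
  simp only [Blk, Finset.mem_Ico] at h1 h2
  exact absurd (lt_of_lt_of_le h1.2 (Nat.pow_le_pow_right two_pos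
    ((fseq_strictMono j).le_iff_le.2 h))) (not_lt.2 h2.1)

/-- `B` eventually hits every level-`j` block. -/
def Hits (j : ℕ) (B : Set ℕ) : Prop := ∃ K, ∀ k, K ≤ k → (B ∩ ↑(Blk j k)).Nonempty

lemma hits_zero_univ : Hits 0 Set.univ := by
  refine ⟨0, fun k _ => ?_⟩
  obtain ⟨n, hn⟩ := Blk_nonempty 0 k
  exact ⟨n, trivial, hn⟩

end SGMF

namespace SGMF2
open SGMF

lemma measure_false_cyl {μ : Measure (ℕ → Bool)} (hμ : IsCantorMeasure μ) (T : Finset ℕ) :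
    μ {y : ℕ → Bool | ∀ n ∈ T, y n = false} = (1/2 : ENNReal) ^ T.card :=
  hμ T fun _ => false

lemma prob {μ : Measure (ℕ → Bool)} (hμ : IsCantorMeasure μ) : μ Set.univ = 1 := by
  have := hμ ∅ fun _ => false
  simpa using this

lemma step {μ : Measure (ℕ → Bool)} (hμ : IsCantorMeasure μ) {B : Set ℕ} {j K : ℕ}
    (hB : ∀ k, K ≤ k → (B ∩ ↑(Blk j k)).Nonempty) :
    μ {y : ℕ → Bool | ¬ Hits (j+1) (B ∩ {n | y n = true})} = 0 := by
  classical
  set D : ℕ → Finset ℕ := fun k => (Blk (j+1) k).filter (· ∈ B) with hD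
  set miss : ℕ → Set (ℕ → Bool) := fun k => {y | ∀ n ∈ D k, y n = false} with hmiss
  -- card bound
  have hcard : ∀ k, K ≤ k → k + 1 ≤ (D k).card := by
    intro k hk
    have hw : ∀ i : ℕ, ∃ n, i ∈ Finset.Ico (2^k) (2^(k+1)) → n ∈ B ∩ ↑(Blk j i) := by
      intro i
      by_cases hi : i ∈ Finset.Ico (2^k) (2^(k+1))
      · rw [Finset.mem_Ico] at hi
        obtain ⟨n, hn⟩ := hB i (le_trans hk (le_trans (Nat.le_of_lt (Nat.lt_two_pow_self (n := k))) hi.1))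
        exact ⟨n, fun _ => hn⟩
      · exact ⟨0, fun h => absurd h hi⟩
    choose w hw using hw
    have := Finset.card_le_card_of_injOn w
      (fun i hi => by
        have h1 := hw i hi
        rw [Finset.mem_coe, Finset.mem_Ico] at hi
        exact Finset.mem_filter.2 ⟨Blk_subset hi.1 hi.2 h1.2, h1.1⟩)
      (fun i hi i' hi' he => by
        simp only [Finset.mem_coe] at hi hi'
        by_contra hne
        rcases Nat.lt_or_ge i i' with h | h
        · exact Blk_disjoint h (hw i hi).2 (he ▸ (hw i' hi').2)
        · rcases Nat.lt_or_ge i' i with h2 | h2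
          · exact Blk_disjoint h2 (hw i' hi').2 (he ▸ (hw i hi).2)
          · exact hne (le_antisymm h2 h))
    refine le_trans ?_ this
    rw [Nat.card_Ico]
    have h1 : k < 2^k := Nat.lt_two_pow_self
    have h2 : 2^(k+1) = 2^k + 2^k := by rw [pow_succ]; ring
    omega
  -- measure bound
  have hmeas : ∀ k, μ (miss k) ≤ 2^K * (1/2 : ENNReal)^k := by
    intro k
    rcases Nat.lt_or_ge k K with h | h
    · calc μ (miss k) ≤ μ Set.univ := measure_mono (Set.subset_univ _)
        _ = 1 := prob hμ
        _ = 2^k * (1/2 : ENNReal)^k := by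
            rw [one_div, ← mul_pow, ENNReal.mul_inv_cancel (by norm_num) (by norm_num), one_pow]
        _ ≤ 2^K * (1/2 : ENNReal)^k :=
            mul_le_mul_left (pow_le_pow_right₀ (by norm_num) (by omega)) _
    · have h1 : μ (miss k) = (1/2 : ENNReal) ^ (D k).card := measure_false_cyl hμ (D k)
      rw [h1]
      calc (1/2 : ENNReal) ^ (D k).card ≤ (1/2 : ENNReal)^k := by
            exact pow_le_pow_right_of_le_one' (by norm_num)
              (le_trans (Nat.le_succ k) (hcard k h))
        _ ≤ 2^K * (1/2 : ENNReal)^k := by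
            nth_rewrite 1 [← one_mul ((1/2 : ENNReal)^k)]
            exact mul_le_mul_left (one_le_pow_of_one_le' (by norm_num : (1:ENNReal) ≤ 2) K) _
  have hsum : ∑' k, μ (miss k) ≠ ⊤ := by
    refine ne_of_lt (lt_of_le_of_lt (ENNReal.tsum_le_tsum hmeas) ?_)
    rw [ENNReal.tsum_mul_left, ENNReal.tsum_geometric]
    have h2 : ((1:ENNReal) - 1/2)⁻¹ = 2 := by
      rw [one_div, ENNReal.one_sub_inv_two, inv_inv]
    rw [h2]
    exact ENNReal.mul_lt_top (ENNReal.pow_lt_top (by norm_num)) (by norm_num)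
  -- bad set inside all tails
  have hsub : ∀ m, {y : ℕ → Bool | ¬ Hits (j+1) (B ∩ {n | y n = true})} ⊆
      ⋃ i, miss (i + m) := by
    intro m y hy
    simp only [Hits, not_exists] at hy
    have := hy m
    push_neg at this
    obtain ⟨k, hkm, hk⟩ := this
    refine Set.mem_iUnion.2 ⟨k - m, ?_⟩
    have hkeq : k - m + m = k := Nat.sub_add_cancel hkm
    rw [hkeq]
    intro n hn
    rw [hD, Finset.mem_filter] at hn
    by_contra hfalse
    have : y n = true := by
      cases hyn : y n
      · exact absurd hyn hfalse
      · rfl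
    exact absurd (⟨n, ⟨hn.2, this⟩, hn.1⟩ :
      (B ∩ {n | y n = true} ∩ ↑(Blk (j + 1) k)).Nonempty) (by rw [hk]; exact Set.not_nonempty_empty)
  have hbound : ∀ m, μ {y : ℕ → Bool | ¬ Hits (j+1) (B ∩ {n | y n = true})} ≤
      ∑' i, μ (miss (i + m)) := fun m =>
    le_trans (measure_mono (hsub m)) (measure_iUnion_le _)
  have htend := ENNReal.tendsto_sum_nat_add (fun k => μ (miss k)) hsum
  have := ge_of_tendsto' htend hbound
  exact le_antisymm this zero_le

end SGMF2

namespace SGMF3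
open SGMF MeasurableSpace

def Cyl (s : Finset ℕ) (f : ℕ → Bool) : Set (ℕ → Bool) := {x | ∀ i ∈ s, x i = f i}

def Cyls : Set (Set (ℕ → Bool)) := {T | ∃ s f, T = Cyl s f}

lemma measurableSet_cyl (s : Finset ℕ) (f : ℕ → Bool) : MeasurableSet (Cyl s f) := by
  have : Cyl s f = ⋂ i ∈ s, (fun x : ℕ → Bool => x i) ⁻¹' {f i} := by
    ext x; simp [Cyl]
  rw [this]
  exact MeasurableSet.biInter (Finset.countable_toSet s)
    fun i _ => (measurable_pi_apply i) (measurableSet_singleton _)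

lemma gen_eq : (inferInstance : MeasurableSpace (ℕ → Bool)) = generateFrom Cyls := by
  refine le_antisymm ?_ (generateFrom_le ?_)
  · show MeasurableSpace.pi ≤ generateFrom Cyls
    refine iSup_le fun i => ?_
    rw [comap_le_iff_le_map]
    intro t _
    show MeasurableSet[generateFrom Cyls] ((fun x : ℕ → Bool => x i) ⁻¹' t)
    have : (fun x : ℕ → Bool => x i) ⁻¹' t = ⋃ b ∈ t, {x : ℕ → Bool | x i = b} := by
      ext x; simp
    rw [this]
    refine MeasurableSet.biUnion (Set.to_countable t) fun b _ => ?_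
    refine MeasurableSpace.measurableSet_generateFrom ⟨{i}, fun _ => b, ?_⟩
    ext x; simp [Cyl]
  · rintro T ⟨s, f, rfl⟩
    exact measurableSet_cyl s f

lemma pisys : IsPiSystem Cyls := by
  rintro T1 ⟨s1, f1, rfl⟩ T2 ⟨s2, f2, rfl⟩ hne
  obtain ⟨w, hw1, hw2⟩ := hne
  refine ⟨s1 ∪ s2, fun i => if i ∈ s1 then f1 i else f2 i, ?_⟩
  ext x
  simp only [Cyl, Set.mem_inter_iff, Set.mem_setOf_eq, Finset.mem_union]
  constructor
  · rintro ⟨h1, h2⟩ i hi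
    by_cases hs1 : i ∈ s1
    · simp [hs1, h1 i hs1]
    · simp [hs1, h2 i (hi.resolve_left hs1)]
  · intro h
    constructor
    · intro i hi
      have := h i (Or.inl hi)
      simpa [hi] using this
    · intro i hi
      have := h i (Or.inr hi)
      by_cases hs1 : i ∈ s1
      · rw [if_pos hs1] at this
        rw [this, ← hw1 i hs1, hw2 i hi]
      · rwa [if_neg hs1] at this

open scoped Classical in
noncomputable def flipS (u : Set ℕ) (x : ℕ → Bool) : ℕ → Bool :=
  fun n => if n ∈ u then !(x n) else x n

lemma flipS_invol (u : Set ℕ) (x : ℕ → Bool) : flipS u (flipS u x) = x := by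
  funext n
  by_cases h : n ∈ u <;> simp [flipS, h]

lemma flipS_measurable (u : Set ℕ) : Measurable (flipS u) := by
  refine measurable_pi_lambda _ fun n => ?_
  by_cases h : n ∈ u
  · simp only [flipS, if_pos h]
    exact Measurable.comp (measurable_from_top (f := Bool.not)) (measurable_pi_apply n)
  · simp only [flipS, if_neg h]
    exact measurable_pi_apply n

open scoped Classical in
lemma flipS_preimage_cyl (u : Set ℕ) (s : Finset ℕ) (f : ℕ → Bool) :
    flipS u ⁻¹' Cyl s f = Cyl s (fun i => if i ∈ u then !(f i) else f i) := by
  ext x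
  simp only [Cyl, Set.mem_preimage, Set.mem_setOf_eq, flipS]
  constructor
  · intro h i hi
    have := h i hi
    by_cases hu : i ∈ u
    · rw [if_pos hu] at this ⊢
      cases hx : x i <;> cases hf : f i <;> simp_all
    · rw [if_neg hu] at this ⊢
      exact this
  · intro h i hi
    have := h i hi
    by_cases hu : i ∈ u
    · rw [if_pos hu] at this ⊢
      cases hx : x i <;> cases hf : f i <;> simp_all
    · rw [if_neg hu] at this ⊢
      exact this

lemma flipS_measurePreserving {μ : Measure (ℕ → Bool)} (hμ : IsCantorMeasure μ) (u : Set ℕ) :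
    MeasurePreserving (flipS u) μ μ := by
  haveI : IsProbabilityMeasure μ := ⟨SGMF2.prob hμ⟩
  refine ⟨flipS_measurable u, ?_⟩
  haveI : IsProbabilityMeasure (Measure.map (flipS u) μ) :=
    MeasureTheory.Measure.isProbabilityMeasure_map (flipS_measurable u).aemeasurable
  refine ext_of_generate_finite Cyls gen_eq pisys ?_ (by simp)
  rintro T ⟨s, f, rfl⟩
  classical
  rw [Measure.map_apply (flipS_measurable u) (measurableSet_cyl s f),
    flipS_preimage_cyl]
  exact (hμ s _).trans (hμ s f).symm

end SGMF3

namespace SGMF4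
open SGMF SGMF3

lemma cyl_congr {s : Finset ℕ} {p q : ℕ → Bool} (h : ∀ i ∈ s, p i = q i) :
    Cyl s p = Cyl s q := by
  ext x
  exact ⟨fun hx i hi => (hx i hi).trans (h i hi), fun hx i hi => (hx i hi).trans (h i hi).symm⟩

lemma zero_one {μ : Measure (ℕ → Bool)} (hμ : IsCantorMeasure μ) {A E : Set (ℕ → Bool)}
    (hE : MeasurableSet E) (hAE : A =ᵐ[μ] E)
    (hinv : ∀ u : Set ℕ, u.Finite → flipS u ⁻¹' A = A) : μ E = 0 ∨ μ E = 1 := by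
  classical
  haveI : IsProbabilityMeasure μ := ⟨SGMF2.prob hμ⟩
  have hEflip : ∀ u : Set ℕ, u.Finite → flipS u ⁻¹' E =ᵐ[μ] E := by
    intro u hufin
    have hq := (flipS_measurePreserving hμ u).quasiMeasurePreserving
    have h1 : flipS u ⁻¹' A =ᵐ[μ] flipS u ⁻¹' E := hq.preimage_ae_eq hAE
    have h2 : flipS u ⁻¹' A =ᵐ[μ] E := (hinv u hufin).symm ▸ hAE
    exact h1.symm.trans h2
  have key : ∀ (s : Finset ℕ) (f : ℕ → Bool),
      μ (E ∩ Cyl s f) = μ E * (1/2 : ENNReal) ^ s.card := by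
    intro s f
    set ex : (↥s → Bool) → (ℕ → Bool) :=
      fun g n => if hn : n ∈ s then g ⟨n, hn⟩ else false with hex
    have hexval : ∀ (g : ↥s → Bool) (i : ℕ) (hi : i ∈ s), ex g i = g ⟨i, hi⟩ := by
      intro g i hi; simp [hex, dif_pos hi]
    have heq : ∀ g h : ↥s → Bool, μ (E ∩ Cyl s (ex g)) = μ (E ∩ Cyl s (ex h)) := by
      intro g h
      set u : Set ℕ := {n | n ∈ s ∧ ex g n ≠ ex h n} with hu
      have hpre : flipS u ⁻¹' Cyl s (ex g) = Cyl s (ex h) := by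
        rw [flipS_preimage_cyl]
        refine cyl_congr fun i hi => ?_
        by_cases hiu : i ∈ u
        · rw [if_pos hiu]
          have hne : ex g i ≠ ex h i := hiu.2
          cases hg : ex g i <;> cases hh : ex h i <;> simp_all
        · rw [if_neg hiu]
          by_contra hne
          exact hiu ⟨hi, hne⟩
      have h1 : μ (flipS u ⁻¹' (E ∩ Cyl s (ex g))) = μ (E ∩ Cyl s (ex g)) :=
        (flipS_measurePreserving hμ u).measure_preimage
          (hE.inter (measurableSet_cyl s _)).nullMeasurableSet
      rw [Set.preimage_inter, hpre] at h1
      have hufin : u.Finite := Set.Finite.subset s.finite_toSet fun n hn => hn.1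
      rw [← h1]
      exact measure_congr ((hEflip u hufin).inter (Filter.EventuallyEq.refl _ _))
    -- the atoms partition E
    have hdisj : Pairwise (Function.onFun Disjoint
        (fun g : ↥s → Bool => E ∩ Cyl s (ex g))) := by
      intro g h hgh
      rw [Function.onFun, Set.disjoint_left]
      rintro x ⟨-, hxg⟩ ⟨-, hxh⟩
      refine hgh (funext fun i => ?_)
      rw [← hexval g i.1 i.2, ← hexval h i.1 i.2, ← hxg i.1 i.2, ← hxh i.1 i.2]
    have hunion : (⋃ g : ↥s → Bool, (E ∩ Cyl s (ex g))) = E := by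
      ext x
      constructor
      · rintro ⟨-, ⟨g, rfl⟩, hx, -⟩
        exact hx
      · intro hx
        refine Set.mem_iUnion.2 ⟨fun i => x i.1, hx, fun i hi => ?_⟩
        rw [hexval (fun j => x j.1) i hi]
    have hsum : ∑ g : (↥s → Bool), μ (E ∩ Cyl s (ex g)) = μ E := by
      rw [← tsum_fintype (L := SummationFilter.unconditional _), ← measure_iUnion hdisj
        fun g => hE.inter (measurableSet_cyl s _), hunion]
    have hcardfun : (Finset.univ : Finset (↥s → Bool)).card = 2 ^ s.card := by
      rw [Finset.card_univ, Fintype.card_fun]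
      simp
    have hgf : Cyl s (ex fun i => f i.1) = Cyl s f :=
      cyl_congr fun i hi => (hexval (fun j => f j.1) i hi).trans rfl
    have hconst : ∑ g : (↥s → Bool), μ (E ∩ Cyl s (ex g)) =
        (2 ^ s.card : ℕ) * μ (E ∩ Cyl s f) := by
      rw [← hgf]
      rw [Finset.sum_congr rfl fun g _ => heq g fun i => f i.1]
      rw [Finset.sum_const, hcardfun, nsmul_eq_mul]
    have hkey : μ E = (2 ^ s.card : ℕ) * μ (E ∩ Cyl s f) := by
      rw [← hsum, hconst]
    have h2 : ((2 ^ s.card : ℕ) : ENNReal) * (1/2 : ENNReal) ^ s.card = 1 := by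
      push_cast
      rw [one_div, ← mul_pow, ENNReal.mul_inv_cancel (by norm_num) (by norm_num), one_pow]
    calc μ (E ∩ Cyl s f) = 1 * μ (E ∩ Cyl s f) := (one_mul _).symm
      _ = (1/2 : ENNReal) ^ s.card * ((2 ^ s.card : ℕ) * μ (E ∩ Cyl s f)) := by
          rw [← mul_assoc, mul_comm ((1/2 : ENNReal) ^ s.card), h2]
      _ = μ E * (1/2 : ENNReal) ^ s.card := by rw [← hkey, mul_comm]
  -- restrict = smul
  have hres : μ.restrict E = (μ E) • μ := by
    refine ext_of_generate_finite Cyls gen_eq pisys ?_ ?_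
    · rintro T ⟨s, f, rfl⟩
      rw [Measure.restrict_apply (measurableSet_cyl s f), Set.inter_comm, key s f,
        Measure.smul_apply, smul_eq_mul,
        show μ (Cyl s f) = (1/2 : ENNReal) ^ s.card from hμ s f]
    · rw [Measure.restrict_apply_univ, Measure.smul_apply, smul_eq_mul,
        measure_univ, mul_one]
  have := congrArg (fun ν : Measure (ℕ → Bool) => ν E) hres
  simp only [Measure.restrict_apply_self, Measure.smul_apply, smul_eq_mul] at this
  by_cases h0 : μ E = 0
  · exact Or.inl h0
  · refine Or.inr ?_
    have hfin : μ E ≠ ⊤ := measure_ne_top μ E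
    have h1 : μ E * 1 = μ E * μ E := by rw [mul_one]; exact this
    exact ((ENNReal.mul_right_inj h0 hfin).1 h1).symm

end SGMF4

namespace SGMF5
open SGMF

def Mjk (j K : ℕ) : Set (ℕ → Bool) := {y | ∀ k, K ≤ k → ∃ n ∈ Blk j k, y n = true}

lemma isClosed_Mjk (j K : ℕ) : IsClosed (Mjk j K) := by
  have : Mjk j K = ⋂ (k : ℕ) (_ : K ≤ k), ⋃ n ∈ Blk j k, {y : ℕ → Bool | y n = true} := by
    ext y; simp [Mjk]
  rw [this]
  refine isClosed_iInter fun k => isClosed_iInter fun _ => ?_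
  refine Set.Finite.isClosed_biUnion (Blk j k).finite_toSet fun n _ => ?_
  have : {y : ℕ → Bool | y n = true} = (fun y : ℕ → Bool => y n) ⁻¹' {true} := rfl
  rw [this]
  exact IsClosed.preimage (continuous_apply (A := fun _ : ℕ => Bool) n)
    (isClosed_discrete ({true} : Set Bool))

lemma interior_Mjk (j K : ℕ) : interior (Mjk j K) = ∅ := by
  rw [Set.eq_empty_iff_forall_notMem]
  intro y hy
  obtain ⟨U, hUM, hUopen, hyU⟩ := mem_interior.1 hy
  obtain ⟨I, u, hIu, hpi⟩ := (isOpen_pi_iff.1 hUopen) y hyU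
  set k := K + (I.sup id) + 1 with hk
  have hnI : ∀ n ∈ Blk j k, n ∉ I := by
    intro n hn hnI
    have h1 : n ≤ I.sup id := Finset.le_sup (f := id) hnI
    have h2 : k ≤ n := k_le_of_mem_Blk hn
    omega
  classical
  set z : ℕ → Bool := fun n => if n ∈ Blk j k then false else y n with hz
  have hzU : z ∈ U := by
    refine hpi ?_
    intro i hi
    have : z i = y i := by
      simp only [hz]
      rw [if_neg (fun h => hnI i h hi)]
    rw [this]
    exact (hIu i hi).2
  have := hUM hzU k (by omega)
  obtain ⟨n, hn, hzn⟩ := this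
  simp only [hz, if_pos hn] at hzn
  exact Bool.false_ne_true hzn

lemma nowhereDense_Mjk (j K : ℕ) : IsNowhereDense (Mjk j K) := by
  rw [IsNowhereDense, (isClosed_Mjk j K).closure_eq]
  exact interior_Mjk j K

lemma meagre_of_subset {s : Set (ℕ → Bool)} (h : s ⊆ ⋃ p : ℕ × ℕ, Mjk p.1 p.2) :
    IsMeagre s := by
  rw [isMeagre_iff_countable_union_isNowhereDense]
  refine ⟨Set.range fun p : ℕ × ℕ => Mjk p.1 p.2, ?_, Set.countable_range _, ?_⟩
  · rintro t ⟨p, rfl⟩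
    exact nowhereDense_Mjk p.1 p.2
  · rwa [Set.sUnion_range]

end SGMF5

open scoped Classical in
noncomputable def chi' (X : Set ℕ) : ℕ → Bool := fun n => if n ∈ X then true else false

namespace SGMF6
open SGMF SGMF3
open scoped Classical

def NN (t : Finset (ℕ → Bool)) : Set ℕ := {n | ∀ x ∈ t, x n = true}

lemma NN_empty : NN ∅ = Set.univ := by ext n; simp [NN]

lemma NN_insert (a : ℕ → Bool) (t : Finset (ℕ → Bool)) :
    NN (insert a t) = NN t ∩ {n | a n = true} := by
  ext n; simp [NN]; tauto

lemma NN_union (s t : Finset (ℕ → Bool)) : NN (s ∪ t) = NN s ∩ NN t := by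
  ext n
  simp only [NN, Set.mem_setOf_eq, Set.mem_inter_iff, Finset.mem_union]
  exact ⟨fun h => ⟨fun x hx => h x (Or.inl hx), fun x hx => h x (Or.inr hx)⟩,
    fun h x hx => hx.elim (h.1 x) (h.2 x)⟩

def HH (t : Finset (ℕ → Bool)) : Set (ℕ → Bool) :=
  {y | ¬ Hits (t.card + 1) (NN t ∩ {n | y n = true})}

lemma measure_HH {μ : Measure (ℕ → Bool)} (hμ : IsCantorMeasure μ) {t : Finset (ℕ → Bool)}
    (h : Hits t.card (NN t)) : μ (HH t) = 0 := by
  obtain ⟨K, hK⟩ := h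
  exact SGMF2.step hμ hK

lemma hits_NN_empty : Hits 0 (NN ∅) := by rw [NN_empty]; exact hits_zero_univ

noncomputable def pick (G : Set (ℕ → Bool)) : ℕ → Bool :=
  if h : G.Nonempty then h.choose else fun _ => false

lemma pick_mem {G : Set (ℕ → Bool)} (h : G.Nonempty) : pick G ∈ G := by
  rw [pick, dif_pos h]; exact h.choose_spec

def badU (P : Set (ℕ → Bool)) : Set (ℕ → Bool) :=
  P ∪ ⋃ (t : Finset (ℕ → Bool)) (_ : ↑t ⊆ P), HH t

noncomputable def recf (S : Set (ℕ → Bool)) {ι : Type} [LinearOrder ι]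
    [IsWellFounded ι (· < ·)] : ι → (ℕ → Bool) :=
  IsWellFounded.fix (· < ·)
    (fun x prev => pick (S \ badU {z | ∃ y, ∃ h : y < x, prev y h = z}))

lemma recf_eq (S : Set (ℕ → Bool)) {ι : Type} [LinearOrder ι]
    [IsWellFounded ι (· < ·)] (x : ι) :
    recf S x = pick (S \ badU (recf S '' Set.Iio x)) := by
  show IsWellFounded.fix _ _ x = _
  rw [IsWellFounded.fix_eq]
  have h : {z | ∃ y, ∃ _ : y < x, recf S y = z} = recf S '' Set.Iio x := by
    ext z
    exact ⟨fun ⟨y, hy, hz⟩ => ⟨y, hy, hz⟩, fun ⟨y, hy, hz⟩ => ⟨y, hy, hz⟩⟩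
  rw [← h]
  rfl

lemma chi'_eq_true_iff (X : Set ℕ) (n : ℕ) : chi' X n = true ↔ n ∈ X := by
  by_cases h : n ∈ X <;> simp [chi', h]

lemma chi'_inj : Function.Injective chi' := by
  intro X Y h
  ext n
  rw [← chi'_eq_true_iff X n, ← chi'_eq_true_iff Y n, h]

lemma chi'_of_fun (x : ℕ → Bool) : chi' {n | x n = true} = x := by
  funext n
  cases h : x n <;> simp [chi', h]

lemma flipS_chi' (v X : Set ℕ) : flipS v (chi' X) = chi' (symmDiff X v) := by
  funext n
  by_cases hv : n ∈ v <;> by_cases hX : n ∈ X <;>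
    simp [flipS, chi', hv, hX, Set.mem_symmDiff]

end SGMF6

lemma chi_eq_chi' : chi = chi' := rfl

/-- If there is a generalized Sierpinski set of size `κ` (a regular uncountable cardinal),
then there is a free filter on `ℕ` which is meager but not `μ`-measurable. -/
theorem sierpinski_gives_meager_nonmeasurable_filter
    (μ : Measure (ℕ → Bool)) (hμ : IsCantorMeasure μ)
    (κ : Cardinal.{0}) (hreg : κ.IsRegular) (hunc : Cardinal.aleph0 < κ)
    (S : Set (ℕ → Bool)) (hScard : Cardinal.mk S = κ)
    (hSier : ∀ H : Set (ℕ → Bool), μ H = 0 → Cardinal.mk (↥(S ∩ H)) < κ) :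
    ∃ F : Set (Set ℕ), IsFreeFilter F ∧ IsMeagre (chi '' F) ∧
      ¬ NullMeasurableSet (chi '' F) μ := by

  classical
  haveI : IsProbabilityMeasure μ := ⟨SGMF2.prob hμ⟩
  set ι := (Cardinal.ord κ).ToType with hιdef
  let f : ι → (ℕ → Bool) := SGMF6.recf S
  -- the invariant given goodness of the used indices
  have inv_of : ∀ u : Finset ι, (∀ y ∈ u, f y ∈ S \ SGMF6.badU (f '' Set.Iio y)) →
      SGMF.Hits ((u.image f).card) (SGMF6.NN (u.image f)) := by
    intro u
    induction u using Finset.induction_on_max with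
    | empty =>
      intro _
      simpa using SGMF6.hits_NN_empty
    | insert a u ha IH =>
      intro hgood
      have IH' := IH (fun y hy => hgood y (Finset.mem_insert_of_mem hy))
      have hga := hgood a (Finset.mem_insert_self a u)
      have hsub : ↑(u.image f) ⊆ f '' Set.Iio a := by
        intro z hz
        rw [Finset.coe_image] at hz
        obtain ⟨y, hy, rfl⟩ := hz
        exact ⟨y, ha y hy, rfl⟩
      have hnotH : f a ∉ SGMF6.HH (u.image f) := by
        intro hmem
        exact hga.2 (Or.inr (Set.mem_iUnion₂.2 ⟨u.image f, hsub, hmem⟩))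
      have hnotP : f a ∉ f '' Set.Iio a := fun h => hga.2 (Or.inl h)
      have hnew : f a ∉ u.image f := fun h => hnotP (hsub h)
      rw [Finset.image_insert, Finset.card_insert_of_notMem hnew, SGMF6.NN_insert]
      simp only [SGMF6.HH, Set.mem_setOf_eq, not_not] at hnotH
      exact hnotH
  -- every value is chosen correctly
  have hP : ∀ x : ι, f x ∈ S \ SGMF6.badU (f '' Set.Iio x) := by
    intro x
    induction x using IsWellFounded.induction (α := ι) (· < ·) with
    | _ x IH =>
    set P := f '' Set.Iio x with hPdef
    have hPcard : Cardinal.mk ↥P < κ :=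
      lt_of_le_of_lt Cardinal.mk_image_le (Cardinal.mk_Iio_ord_toType x)
    -- each HH t used is null
    have hHt0 : ∀ t : Finset (ℕ → Bool), ↑t ⊆ P → μ (SGMF6.HH t) = 0 := by
      intro t ht
      have hex : ∀ z ∈ t, ∃ y, y < x ∧ f y = z := by
        intro z hz
        obtain ⟨y, hy, hyz⟩ := ht hz
        exact ⟨y, hy, hyz⟩
      choose gy hgy using hex
      set u : Finset ι := t.attach.image (fun z => gy z.1 z.2) with hu
      have himg : u.image f = t := by
        rw [hu, Finset.image_image]
        ext z
        simp only [Finset.mem_image, Finset.mem_attach, true_and, Subtype.exists,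
          Function.comp_apply]
        constructor
        · rintro ⟨w, hw, rfl⟩
          rw [(hgy w hw).2]
          exact hw
        · intro hz
          exact ⟨z, hz, (hgy z hz).2⟩
      have hgood : ∀ y ∈ u, f y ∈ S \ SGMF6.badU (f '' Set.Iio y) := by
        intro y hy
        rw [hu, Finset.mem_image] at hy
        obtain ⟨z, _, rfl⟩ := hy
        exact IH _ (hgy z.1 z.2).1
      have := inv_of u hgood
      rw [himg] at this
      exact SGMF6.measure_HH hμ this
    -- cardinality of the bad set
    have hbad : Cardinal.mk ↥(S ∩ SGMF6.badU P) < κ := by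
      set T : Set (Finset (ℕ → Bool)) := {t | ↑t ⊆ P} with hT
      have hTcard : Cardinal.mk ↥T < κ := by
        have hsurj : Function.Surjective
            (fun l : List ↥P => (⟨(l.map Subtype.val).toFinset, by
              intro z hz
              rw [Finset.mem_coe, List.mem_toFinset, List.mem_map] at hz
              obtain ⟨w, _, rfl⟩ := hz
              exact w.2⟩ : ↥T)) := by
          rintro ⟨t, ht⟩
          refine ⟨t.toList.attach.map (fun z =>
            (⟨z.1, ht (Finset.mem_toList.1 z.2)⟩ : ↥P)), ?_⟩
          apply Subtype.ext
          simp only [List.map_map]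
          have h2 : (Subtype.val ∘ fun z : {y // y ∈ t.toList} =>
              (⟨z.1, ht (Finset.mem_toList.1 z.2)⟩ : ↥P)) = Subtype.val := rfl
          rw [h2, List.attach_map_subtype_val, Finset.toList_toFinset]
        have h1 : Cardinal.mk ↥T ≤ Cardinal.mk (List ↥P) := Cardinal.mk_le_of_surjective hsurj
        refine lt_of_le_of_lt (h1.trans (Cardinal.mk_list_le_max _)) ?_
        exact max_lt hunc hPcard
      have hsub : S ∩ SGMF6.badU P ⊆ P ∪ ⋃ t : ↥T, (S ∩ SGMF6.HH t.1) := by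
        rintro z ⟨hzS, hzbad⟩
        rcases hzbad with h | h
        · exact Or.inl h
        · obtain ⟨t, ht, hz⟩ := Set.mem_iUnion₂.1 h
          exact Or.inr (Set.mem_iUnion.2 ⟨⟨t, ht⟩, hzS, hz⟩)
      refine lt_of_le_of_lt (Cardinal.mk_le_mk_of_subset hsub) ?_
      refine lt_of_le_of_lt (Cardinal.mk_union_le _ _) ?_
      refine Cardinal.add_lt_of_lt hreg.aleph0_le hPcard ?_
      refine lt_of_le_of_lt (Cardinal.mk_iUnion_le _) ?_
      refine Cardinal.mul_lt_of_lt hreg.aleph0_le hTcard ?_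
      refine Cardinal.iSup_lt_of_isRegular hreg hTcard ?_
      exact fun t => hSier (SGMF6.HH t.1) (hHt0 t.1 t.2)
    -- nonemptiness
    have hne : (S \ SGMF6.badU P).Nonempty := by
      rw [Set.nonempty_iff_ne_empty]
      intro hempty
      have hsub2 : S ⊆ SGMF6.badU P := Set.diff_eq_empty.1 hempty
      have : Cardinal.mk ↥S ≤ Cardinal.mk ↥(S ∩ SGMF6.badU P) :=
        Cardinal.mk_le_mk_of_subset (fun z hz => ⟨hz, hsub2 hz⟩)
      rw [hScard] at this
      exact absurd (lt_of_le_of_lt this hbad) (lt_irrefl κ)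
    rw [show f x = SGMF6.pick (S \ SGMF6.badU (f '' Set.Iio x)) from SGMF6.recf_eq S x]
    exact SGMF6.pick_mem hne
  
  have hfS : ∀ x : ι, f x ∈ S := fun x => (hP x).1
  have hf_notim : ∀ x : ι, f x ∉ f '' Set.Iio x := fun x h => (hP x).2 (Or.inl h)
  have hf_inj : Function.Injective f := by
    intro x y hxy
    rcases lt_trichotomy x y with h | h | h
    · exact absurd ⟨x, h, hxy⟩ (hf_notim y)
    · exact h
    · exact absurd ⟨y, h, hxy.symm⟩ (hf_notim x)
  have hInv : ∀ u : Finset ι, SGMF.Hits ((u.image f).card) (SGMF6.NN (u.image f)) :=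
    fun u => inv_of u (fun y _ => hP y)
  set F : Set (Set ℕ) :=
    {Y | ∃ u : Finset ι, ∃ m : ℕ, SGMF6.NN (u.image f) ∩ Set.Ici m ⊆ Y} with hF
  have hhit : ∀ (u : Finset ι) (m : ℕ), ∃ K, ∀ k, K ≤ k →
      ∃ n, n ∈ SGMF6.NN (u.image f) ∩ Set.Ici m ∧ n ∈ SGMF.Blk (u.image f).card k := by
    intro u m
    obtain ⟨K, hK⟩ := hInv u
    refine ⟨max K m, fun k hk => ?_⟩
    obtain ⟨n, hnN, hnB⟩ := hK k (le_trans (le_max_left _ _) hk)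
    have hm : m ≤ n := le_trans (le_trans (le_max_right K m) hk) (SGMF.k_le_of_mem_Blk hnB)
    exact ⟨n, ⟨hnN, hm⟩, hnB⟩
  have hFfilter : IsSetFilter F := by
    refine ⟨⟨∅, 0, fun n _ => trivial⟩, ?_, ?_⟩
    · rintro X ⟨u1, m1, h1⟩ Y ⟨u2, m2, h2⟩
      refine ⟨u1 ∪ u2, max m1 m2, ?_⟩
      rintro n ⟨hnN, hnI⟩
      rw [Finset.image_union, SGMF6.NN_union] at hnN
      exact ⟨h1 ⟨hnN.1, (show m1 ≤ n from le_trans (le_max_left _ _) hnI)⟩,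
        h2 ⟨hnN.2, (show m2 ≤ n from le_trans (le_max_right _ _) hnI)⟩⟩
    · rintro X ⟨u, m, h⟩ Y hXY
      exact ⟨u, m, fun n hn => hXY (h hn)⟩
  have hFempty : ∅ ∉ F := by
    rintro ⟨u, m, hsub⟩
    obtain ⟨K, hK⟩ := hhit u m
    obtain ⟨n, hn, -⟩ := hK K le_rfl
    exact hsub hn
  have hFcof : ∀ X : Set ℕ, Xᶜ.Finite → X ∈ F := by
    intro X hXc
    obtain ⟨b, hb⟩ := hXc.bddAbove
    refine ⟨∅, b + 1, ?_⟩
    rintro n ⟨-, hnI⟩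
    by_contra hnX
    have h1 : n ≤ b := hb hnX
    have h2 : b + 1 ≤ n := hnI
    omega
  have hmemF : ∀ x : ι, ({n | f x n = true} : Set ℕ) ∈ F := by
    intro x
    refine ⟨{x}, 0, ?_⟩
    rintro n ⟨hnN, -⟩
    exact hnN (f x) (by rw [Finset.image_singleton]; exact Finset.mem_singleton_self _)
  have hchi : ∀ x : ι, f x ∈ chi '' F := fun x =>
    ⟨{n | f x n = true}, hmemF x, by rw [chi_eq_chi']; exact SGMF6.chi'_of_fun (f x)⟩
  have hmeagre : IsMeagre (chi '' F) := by
    refine SGMF5.meagre_of_subset ?_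
    rintro _ ⟨Y, ⟨u, m, hsub⟩, rfl⟩
    obtain ⟨K, hK⟩ := hhit u m
    refine Set.mem_iUnion.2 ⟨((u.image f).card, K), ?_⟩
    intro k hk
    obtain ⟨n, hnNI, hnB⟩ := hK k hk
    refine ⟨n, hnB, ?_⟩
    rw [chi_eq_chi', SGMF6.chi'_eq_true_iff]
    exact hsub hnNI
  have hsd : ∀ (Y : Set ℕ) (v : Set ℕ), v.Finite → Y ∈ F → symmDiff Y v ∈ F := by
    rintro Y v hv ⟨u, m, hsub⟩
    obtain ⟨b, hb⟩ := hv.bddAbove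
    refine ⟨u, max m (b+1), ?_⟩
    rintro n ⟨hnN, hnI⟩
    have hm : m ≤ n := le_trans (le_max_left _ _) hnI
    have hb' : b + 1 ≤ n := le_trans (le_max_right _ _) hnI
    have hv' : n ∉ v := fun hnv => by have := hb hnv; omega
    exact Set.mem_symmDiff.2 (Or.inl ⟨hsub ⟨hnN, hm⟩, hv'⟩)
  have hflip : ∀ v : Set ℕ, v.Finite → SGMF3.flipS v ⁻¹' (chi '' F) = chi '' F := by
    have hsub1 : ∀ w : Set ℕ, w.Finite → chi '' F ⊆ SGMF3.flipS w ⁻¹' (chi '' F) := by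
      rintro w hw _ ⟨Y, hY, rfl⟩
      show SGMF3.flipS w (chi Y) ∈ chi '' F
      rw [chi_eq_chi', SGMF6.flipS_chi', ← chi_eq_chi']
      exact ⟨symmDiff Y w, hsd Y w hw hY, rfl⟩
    intro v hv
    refine Set.Subset.antisymm (fun a ha => ?_) (hsub1 v hv)
    have h2 := hsub1 v hv ha
    rw [Set.mem_preimage, SGMF3.flipS_invol] at h2
    exact h2
  refine ⟨F, ⟨hFfilter, hFempty, hFcof⟩, hmeagre, ?_⟩
  intro hNM
  obtain ⟨E, hEsub, hEmeas, hEae⟩ := hNM.exists_measurable_subset_ae_eq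
  rcases SGMF4.zero_one hμ hEmeas hEae.symm hflip with h0 | h1
  · -- measure zero: Sierpinski contradiction
    set Hs := E ∪ (chi '' F \ E) with hHs
    have hH0 : μ Hs = 0 := by
      refine le_antisymm (le_trans (measure_union_le _ _) ?_) zero_le
      rw [h0, zero_add]
      have := (MeasureTheory.ae_eq_set.1 hEae.symm).1
      rw [this]
    have hcov : ∀ x : ι, f x ∈ S ∩ Hs := fun x => ⟨hfS x, by
      by_cases h : f x ∈ E
      · exact Or.inl h
      · exact Or.inr ⟨hchi x, h⟩⟩
    have hinj2 : Function.Injective (fun x : ι => (⟨f x, hcov x⟩ : ↥(S ∩ Hs))) :=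
      fun x y h => hf_inj (congrArg Subtype.val h)
    have hk1 : κ ≤ Cardinal.mk ↥(S ∩ Hs) := by
      have hle := Cardinal.mk_le_of_injective hinj2
      rwa [show Cardinal.mk ι = κ from by
        rw [hιdef, Cardinal.mk_toType, Cardinal.card_ord]] at hle
    exact absurd hk1 (not_le.2 (hSier Hs hH0))
  · -- measure one: complement contradiction
    set c := SGMF3.flipS Set.univ with hc0
    have hdisj : chi '' F ∩ c ⁻¹' (chi '' F) = ∅ := by
      rw [Set.eq_empty_iff_forall_notMem]
      rintro a ⟨⟨Y, hY, rfl⟩, ha2⟩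
      have h3 : c (chi Y) ∈ chi '' F := ha2
      rw [hc0, chi_eq_chi', SGMF6.flipS_chi'] at h3
      have h4 : symmDiff Y Set.univ = Yᶜ := by
        ext n; simp [Set.mem_symmDiff]
      rw [h4, ← chi_eq_chi'] at h3
      obtain ⟨Z, hZ, hZY⟩ := h3
      have hZeq : Z = Yᶜ := by
        rw [chi_eq_chi'] at hZY
        exact SGMF6.chi'_inj hZY
      subst hZeq
      have hint := hFfilter.2.1 Y hY Yᶜ hZ
      rw [Set.inter_compl_self] at hint
      exact hFempty hint
    have hcmp := SGMF3.flipS_measurePreserving hμ Set.univ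
    have hEA0 : μ (E \ chi '' F) = 0 := (MeasureTheory.ae_eq_set.1 hEae).1
    have hsub3 : E ∩ c ⁻¹' E ⊆ (E \ chi '' F) ∪ c ⁻¹' (E \ chi '' F) := by
      rintro z ⟨hz1, hz2⟩
      by_cases hzA : z ∈ chi '' F
      · refine Or.inr ⟨hz2, fun hcA => ?_⟩
        have hz3 : z ∈ chi '' F ∩ c ⁻¹' (chi '' F) := ⟨hzA, hcA⟩
        rw [hdisj] at hz3
        exact hz3
      · exact Or.inl ⟨hz1, hzA⟩
    have hnull : μ (E ∩ c ⁻¹' E) = 0 := by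
      refine le_antisymm (le_trans (measure_mono hsub3) ?_) zero_le
      refine le_trans (measure_union_le _ _) ?_
      rw [hEA0, zero_add]
      have hsub4 : c ⁻¹' (E \ chi '' F) ⊆
          c ⁻¹' (MeasureTheory.toMeasurable μ (E \ chi '' F)) :=
        Set.preimage_mono (MeasureTheory.subset_toMeasurable μ _)
      refine le_trans (measure_mono hsub4) ?_
      rw [hcmp.measure_preimage (measurableSet_toMeasurable μ _).nullMeasurableSet,
        measure_toMeasurable, hEA0]
    have hEc : μ Eᶜ = 0 := by
      rw [measure_compl hEmeas (measure_ne_top μ E), h1, measure_univ, tsub_self]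
    have hcEc : μ (c ⁻¹' Eᶜ) = 0 := by
      rw [hcmp.measure_preimage hEmeas.compl.nullMeasurableSet, hEc]
    have hge : (1:ENNReal) ≤ μ (E ∩ c ⁻¹' E) + (μ Eᶜ + μ (c ⁻¹' Eᶜ)) := by
      have hcover : (Set.univ : Set (ℕ → Bool)) ⊆ (E ∩ c ⁻¹' E) ∪ (Eᶜ ∪ c ⁻¹' Eᶜ) := by
        intro z _
        by_cases hz1 : z ∈ E
        · by_cases hz2 : c z ∈ E
          · exact Or.inl ⟨hz1, hz2⟩
          · exact Or.inr (Or.inr hz2)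
        · exact Or.inr (Or.inl hz1)
      calc (1:ENNReal) = μ Set.univ := measure_univ.symm
        _ ≤ μ ((E ∩ c ⁻¹' E) ∪ (Eᶜ ∪ c ⁻¹' Eᶜ)) := measure_mono hcover
        _ ≤ μ (E ∩ c ⁻¹' E) + μ (Eᶜ ∪ c ⁻¹' Eᶜ) := measure_union_le _ _
        _ ≤ _ := add_le_add_right (measure_union_le _ _) _
    rw [hnull, hEc, hcEc] at hge
    simp at hge
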